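/- Let 𝓗 = (V, 𝓔) be a hypergraph with V̄ = ⋃𝓔 having at least 2 elements. If for all 2-element subsets e, e' of V̄ the identification hypergraphs 𝓗_e and 𝓗_{e'} are isomorphic, then the Boolean function f_𝓗 is irreducible. -/

import Mathlib

open Finset

abbrev BF := Σ n : ℕ, (Fin n → Bool) → Bool

def Minor (g f : BF) : Prop :=
  ∃ σ : Fin f.1 → Fin g.1, ∀ a : Fin g.1 → Bool, g.2 a = f.2 (a ∘ σ)

def EquivBF (f g : BF) : Prop := Minor f g ∧ Minor g f

def StrictMinor (g f : BF) : Prop := Minor g f ∧ ¬ Minor f g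

def Essential {n : ℕ} (f : (Fin n → Bool) → Bool) (i : Fin n) : Prop :=
  ∃ a b : Fin n → Bool, (∀ j, j ≠ i → a j = b j) ∧ f a ≠ f b

noncomputable def essArity {n : ℕ} (f : (Fin n → Bool) → Bool) : ℕ :=
  Nat.card {i : Fin n // Essential f i}

noncomputable def gapBF (f : BF) : ℕ :=
  sInf {d | ∃ g : BF, StrictMinor g f ∧ d = essArity f.2 - essArity g.2}

def fH {n : ℕ} (𝓔 : Finset (Finset (Fin n))) : (Fin n → Bool) → Bool :=
  fun a => decide (Odd (𝓔.filter (fun E => ∀ i ∈ E, a i = true)).card)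

def IsQuotientMap {n m : ℕ} (𝓔 : Finset (Finset (Fin n)))
    (𝓔' : Finset (Finset (Fin m))) (h : Fin m → Fin n) : Prop :=
  ∀ s : Finset (Fin n), s ∈ 𝓔 ↔ Odd (𝓔'.filter (fun t => t.image h = s)).card

abbrev HG := Σ n : ℕ, Finset (Finset (Fin n))

def HMinor (H H' : HG) : Prop := ∃ h : Fin H'.1 → Fin H.1, IsQuotientMap H.2 H'.2 h

def identEdges {n : ℕ} (𝓔 : Finset (Finset (Fin n))) (i j : Fin n) :
    Finset (Finset (Fin n)) :=
  Finset.univ.filter (fun E => j ∉ E ∧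
    ((i ∉ E ∧ E ∈ 𝓔) ∨
     (i ∈ E ∧ Odd ((if insert j E ∈ 𝓔 then 1 else 0) +
        (if E ∈ 𝓔 then 1 else 0) + (if insert j (E.erase i) ∈ 𝓔 then 1 else 0)))))

def EdgeIso {n : ℕ} (𝓔 𝓔' : Finset (Finset (Fin n))) : Prop :=
  ∃ φ : Fin n ≃ Fin n, ∀ s : Finset (Fin n), s.image φ ∈ 𝓔' ↔ s ∈ 𝓔

def IrreducibleBF (f : BF) : Prop :=
  ∃ f' : BF, StrictMinor f' f ∧ ∀ g : BF, StrictMinor g f → Minor g f'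

/-!
Identifying two vertices `i ≠ j` of `V̄` turns `f_𝓗` into `f_{𝓗_{ij}}`: the identification
hypergraph keeps exactly the images of edges that occur an odd number of times, and odd
multiplicities are all that `f` sees. Every vertex of `V̄` is an essential variable of `f_𝓗`
(flip it on an inclusion-minimal edge through it), while `𝓗_{ij}` lives on fewer vertices, so
`f_{𝓗_{ij}}` is a strict minor. Conversely, a strict minor of `f_𝓗` cannot be injective on the
essential variables, so it factors through some identification `f_{𝓗_{ij}}`; as all the `𝓗_{ij}`
are isomorphic, any one of them is the largest strict minor.
-/

theorem Minor.trans {h g f : BF} (hhg : Minor h g) (hgf : Minor g f) : Minor h f := by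
  obtain ⟨σ, hσ⟩ := hhg
  obtain ⟨τ, hτ⟩ := hgf
  exact ⟨σ ∘ τ, fun a => (hσ a).trans (hτ (a ∘ σ))⟩

theorem minor_of_injOn {n : ℕ} {F : (Fin n → Bool) → Bool} {g : BF} {σ : Fin n → Fin g.1}
    (hσ : ∀ a, g.2 a = F (a ∘ σ)) {S : Set (Fin n)} (hS : S.Nonempty)
    (hF : ∀ a b, Set.EqOn a b S → F a = F b) (hinj : Set.InjOn σ S) : Minor ⟨n, F⟩ g := by
  have : Nonempty (Fin n) := hS.to_subtype.map Subtype.val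
  refine ⟨Function.invFunOn σ S, fun b => ?_⟩
  rw [hσ]
  exact hF _ _ fun k hk => congrArg b (hinj.leftInvOn_invFunOn hk).symm

theorem exists_essential_of_ne {m : ℕ} (f : (Fin m → Bool) → Bool) {u v : Fin m → Bool}
    (h : f u ≠ f v) : ∃ p, u p ≠ v p ∧ Essential f p := by
  suffices ∀ D : Finset (Fin m), ∀ u, (∀ p ∉ D, u p = v p) → f u ≠ f v →
      ∃ p, u p ≠ v p ∧ Essential f p from
    this univ u (by simp) h
  intro D
  induction D using Finset.induction_on with
  | empty => exact fun u hu h => absurd (congrArg f (funext fun p => hu p (notMem_empty p))) h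
  | insert q D _ ih =>
    intro u hu h
    set w := Function.update u q (v q)
    by_cases hw : f u = f w
    · obtain ⟨p, hp, hess⟩ := ih w (fun p hp => by grind) (hw ▸ h)
      have hpq : p ≠ q := by rintro rfl; simp [w] at hp
      exact ⟨p, by simpa [w, hpq] using hp, hess⟩
    · have huq : u q ≠ v q := fun huq => hw (by simp [w, ← huq])
      exact ⟨q, huq, u, w, fun p hp => by simp [w, hp], hw⟩

theorem Minor.essArity_le {g f : BF} (h : Minor g f) : essArity g.2 ≤ essArity f.2 := by
  obtain ⟨σ, hσ⟩ := h
  have hlift : ∀ k : {k // Essential g.2 k}, ∃ p : {p // Essential f.2 p}, σ p = k := by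
    rintro ⟨k, a, b, hab, hgab⟩
    have hne : f.2 (a ∘ σ) ≠ f.2 (b ∘ σ) := by rwa [← hσ, ← hσ]
    obtain ⟨p, hp, hess⟩ := exists_essential_of_ne f.2 hne
    exact ⟨⟨p, hess⟩, by_contra fun hpk => hp (hab (σ p) hpk)⟩
  choose τ hτ using hlift
  exact Nat.card_le_card_of_injective τ fun k l hkl => Subtype.ext (by rw [← hτ, ← hτ, hkl])

section EssentialFH

variable {n : ℕ}

theorem fH_congr (𝓔 : Finset (Finset (Fin n))) {a b : Fin n → Bool}
    (h : ∀ k ∈ 𝓔.sup id, a k = b k) : fH 𝓔 a = fH 𝓔 b := by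
  unfold fH
  congr 3
  exact filter_congr fun E hE => forall₂_congr fun k hk => by
    rw [h k (le_sup (f := id) hE hk)]

theorem essential_fH_of_mem {𝓔 : Finset (Finset (Fin n))} {k : Fin n} (hk : k ∈ 𝓔.sup id) :
    Essential (fH 𝓔) k := by
  obtain ⟨E, hE, hkE⟩ := mem_sup.1 hk
  -- an inclusion-minimal edge `M ∋ k` is the only edge inside `M` but not inside `M \ {k}`
  obtain ⟨M, ⟨hM, hkM⟩, hmin⟩ :=
    exists_minimal_of_wellFoundedLT (fun E => E ∈ 𝓔 ∧ k ∈ E) ⟨E, hE, hkE⟩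
  have hsplit : {E ∈ 𝓔 | E ⊆ M} = insert M {E ∈ 𝓔 | E ⊆ M.erase k} := by
    ext E
    simp only [mem_filter, mem_insert, subset_erase]
    constructor
    · rintro ⟨hE, hEM⟩
      by_cases hkE : k ∈ E
      · exact Or.inl (hEM.antisymm (hmin ⟨hE, hkE⟩ hEM))
      · exact Or.inr ⟨hE, hEM, hkE⟩
    · rintro (rfl | ⟨hE, hEM, -⟩)
      exacts [⟨hM, subset_rfl⟩, ⟨hE, hEM⟩]
  refine ⟨(· ∈ M), (· ∈ M.erase k), fun p hp => by simp [hp], fun h => ?_⟩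
  simp only [fH, decide_eq_true_eq, ← subset_iff, decide_eq_decide, hsplit] at h
  rw [card_insert_of_notMem (by simp [subset_erase, hkM]), Nat.odd_add_one] at h
  exact iff_not_self h.symm

theorem essential_fH_iff {𝓔 : Finset (Finset (Fin n))} {k : Fin n} :
    Essential (fH 𝓔) k ↔ k ∈ 𝓔.sup id := by
  refine ⟨fun ⟨a, b, hab, hne⟩ => by_contra fun hk => hne (fH_congr 𝓔 fun p hp => ?_),
    essential_fH_of_mem⟩
  exact hab p (by rintro rfl; exact hk hp)

theorem essArity_fH (𝓔 : Finset (Finset (Fin n))) : essArity (fH 𝓔) = #(𝓔.sup id) := by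
  simp only [essArity, essential_fH_iff, Nat.card_eq_fintype_card, Fintype.card_coe]

end EssentialFH

section QuotientMap

variable {n m : ℕ} {𝓔 : Finset (Finset (Fin n))} {𝓔' : Finset (Finset (Fin m))}
  {h : Fin m → Fin n}

theorem IsQuotientMap.odd_card_filter_iff (hq : IsQuotientMap 𝓔 𝓔' h)
    (P : Finset (Fin n) → Prop) [DecidablePred P] :
    Odd #{s ∈ 𝓔 | P s} ↔ Odd #{t ∈ 𝓔' | P (t.image h)} := by
  have hfiber : ∀ s, (#{t ∈ 𝓔' | t.image h = s} : ZMod 2) = if s ∈ 𝓔 then 1 else 0 := by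
    intro s
    by_cases hs : s ∈ 𝓔
    · simp [hs, ZMod.natCast_eq_one_iff_odd.2 ((hq s).1 hs)]
    · simp [hs, ZMod.natCast_eq_zero_iff_even, Nat.not_odd_iff_even.1 (mt (hq s).2 hs)]
  rw [← ZMod.natCast_eq_one_iff_odd, ← ZMod.natCast_eq_one_iff_odd]
  congr! 1
  calc (#{s ∈ 𝓔 | P s} : ZMod 2)
      = ∑ s, (if s ∈ 𝓔 then 1 else 0) * if P s then 1 else 0 := by
        simp only [ite_mul, one_mul, zero_mul, sum_ite_mem, univ_inter, sum_boole]
    _ = ∑ s, ∑ t ∈ 𝓔' with t.image h = s, if P (t.image h) then 1 else 0 := by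
        refine sum_congr rfl fun s _ => ?_
        rw [← hfiber, sum_congr rfl fun t ht => by rw [(mem_filter.1 ht).2], sum_const,
          nsmul_eq_mul]
    _ = #{t ∈ 𝓔' | P (t.image h)} := by
        rw [sum_fiberwise, sum_boole]

theorem IsQuotientMap.fH_eq (hq : IsQuotientMap 𝓔 𝓔' h) (a : Fin n → Bool) :
    fH 𝓔 a = fH 𝓔' (a ∘ h) := by
  have := hq.odd_card_filter_iff (fun s => ∀ k ∈ s, a k = true)
  simp only [forall_mem_image] at this
  simp only [fH, Function.comp_apply, this]

theorem IsQuotientMap.minor (hq : IsQuotientMap 𝓔 𝓔' h) : Minor ⟨n, fH 𝓔⟩ ⟨m, fH 𝓔'⟩ :=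
  ⟨h, hq.fH_eq⟩

theorem IsQuotientMap.sup_subset (hq : IsQuotientMap 𝓔 𝓔' h) :
    𝓔.sup id ⊆ (𝓔'.sup id).image h := by
  intro k hk
  obtain ⟨s, hs, hks⟩ := mem_sup.1 hk
  obtain ⟨t, ht, rfl⟩ : ∃ t ∈ 𝓔', t.image h = s := by
    simpa [Finset.Nonempty] using card_pos.1 ((hq s).1 hs).pos
  exact image_subset_image (le_sup (f := id) ht) hks

end QuotientMap

theorem HMinor.minor_fH {H H' : HG} (h : HMinor H H') : Minor ⟨H.1, fH H.2⟩ ⟨H'.1, fH H'.2⟩ :=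
  let ⟨_, hq⟩ := h
  hq.minor

theorem EdgeIso.hMinor {n : ℕ} {𝓔 𝓔' : Finset (Finset (Fin n))} (hiso : EdgeIso 𝓔 𝓔') :
    HMinor ⟨n, 𝓔⟩ ⟨n, 𝓔'⟩ := by
  obtain ⟨φ, hφ⟩ := hiso
  refine ⟨φ.symm, fun s => ?_⟩
  have : {t ∈ 𝓔' | t.image φ.symm = s} = {t ∈ 𝓔' | t = s.image φ} := by
    refine filter_congr fun t _ => ⟨?_, ?_⟩ <;> rintro rfl <;> simp [image_image]
  rw [this, filter_eq', ← hφ]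
  split_ifs with h <;> simp [h]

section Identification

variable {n : ℕ}

def identMap (i j : Fin n) : Fin n → Fin n := Function.update id j i

theorem image_identMap (i j : Fin n) (E : Finset (Fin n)) :
    E.image (identMap i j) = if j ∈ E then insert i (E.erase j) else E := by
  ext k
  simp only [identMap, mem_image, Function.update_apply, id]
  split_ifs <;> grind

theorem image_identMap_eq_iff {i j : Fin n} (hij : i ≠ j) {E s : Finset (Fin n)} (hjs : j ∉ s) :
    E.image (identMap i j) = s ↔
      E = s ∨ i ∈ s ∧ (E = insert j s ∨ E = insert j (s.erase i)) := by
  rw [image_identMap]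
  split_ifs <;> grind

theorem isQuotientMap_identEdges (𝓔 : Finset (Finset (Fin n))) {i j : Fin n} (hij : i ≠ j) :
    IsQuotientMap (identEdges 𝓔 i j) 𝓔 (identMap i j) := by
  intro s
  by_cases hjs : j ∈ s
  · have hempty : {E ∈ 𝓔 | E.image (identMap i j) = s} = ∅ :=
      filter_eq_empty_iff.2 fun E _ hE => by grind [image_identMap]
    simp [identEdges, hjs, hempty]
  simp only [identEdges, mem_filter, mem_univ, true_and, hjs, not_false_eq_true,
    image_identMap_eq_iff hij hjs]
  by_cases his : i ∈ s
  · have hne₁ : s ≠ insert j s := by grind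
    have hne₂ : s ≠ insert j (s.erase i) := by grind
    have hne₃ : insert j s ≠ insert j (s.erase i) := fun h => by
      have : i ∈ insert j (s.erase i) := h ▸ mem_insert_of_mem his
      simp [hij] at this
    have hfiber : {E ∈ 𝓔 | E = s ∨ (E = insert j s ∨ E = insert j (s.erase i))} =
        {E ∈ ({insert j s, s, insert j (s.erase i)} : Finset _) | E ∈ 𝓔} := by
      ext E
      simp only [mem_filter, mem_insert, mem_singleton]
      tauto
    simp only [his, true_and, not_true_eq_false, false_and, false_or, hfiber, card_filter]
    rw [sum_insert (by simp [hne₁.symm, hne₃]), sum_insert (by simp [hne₂]), sum_singleton,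
      add_assoc]
  · by_cases hs : s ∈ 𝓔 <;> simp [his, hs, filter_eq']

theorem comp_identMap_of_eq {α : Type*} {i j : Fin n} {a : Fin n → α} (h : a i = a j) :
    a ∘ identMap i j = a := by
  rw [identMap, Function.comp_update, Function.comp_id, Function.update_eq_self_iff, h]

theorem fH_identEdges_of_eq (𝓔 : Finset (Finset (Fin n))) {i j : Fin n} (hij : i ≠ j)
    {a : Fin n → Bool} (h : a i = a j) : fH (identEdges 𝓔 i j) a = fH 𝓔 a := by
  rw [(isQuotientMap_identEdges 𝓔 hij).fH_eq, comp_identMap_of_eq h]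

theorem image_identMap_subset_erase {i j : Fin n} (hij : i ≠ j) {s : Finset (Fin n)} (hi : i ∈ s) :
    s.image (identMap i j) ⊆ s.erase j := by
  rw [image_identMap]
  split_ifs <;> grind

theorem card_sup_identEdges_lt {𝓔 : Finset (Finset (Fin n))} {i j : Fin n} (hij : i ≠ j)
    (hi : i ∈ 𝓔.sup id) (hj : j ∈ 𝓔.sup id) : #((identEdges 𝓔 i j).sup id) < #(𝓔.sup id) :=
  calc #((identEdges 𝓔 i j).sup id)
      ≤ #((𝓔.sup id).erase j) :=
        card_le_card <| (isQuotientMap_identEdges 𝓔 hij).sup_subset.trans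
          (image_identMap_subset_erase hij hi)
    _ < #(𝓔.sup id) := card_erase_lt_of_mem hj

end Identification

section Irreducible

variable {n : ℕ} {𝓔 : Finset (Finset (Fin n))}

theorem strictMinor_identEdges {i j : Fin n} (hij : i ≠ j) (hi : i ∈ 𝓔.sup id)
    (hj : j ∈ 𝓔.sup id) : StrictMinor ⟨n, fH (identEdges 𝓔 i j)⟩ ⟨n, fH 𝓔⟩ := by
  refine ⟨(isQuotientMap_identEdges 𝓔 hij).minor, fun h => ?_⟩
  have := h.essArity_le
  simp only [essArity_fH] at this
  exact (card_sup_identEdges_lt hij hi hj).not_ge this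

theorem exists_minor_identEdges_of_strictMinor (hne : (𝓔.sup id).Nonempty) {g : BF}
    (hg : StrictMinor g ⟨n, fH 𝓔⟩) :
    ∃ i ∈ 𝓔.sup id, ∃ j ∈ 𝓔.sup id, i ≠ j ∧ Minor g ⟨n, fH (identEdges 𝓔 i j)⟩ := by
  obtain ⟨⟨σ, hσ⟩, hnot⟩ := hg
  have hninj : ¬ Set.InjOn σ ↑(𝓔.sup id) := fun hinj =>
    hnot (minor_of_injOn hσ (coe_nonempty.2 hne) (fun _ _ => fH_congr 𝓔) hinj)
  obtain ⟨i, hi, j, hj, hσij, hij⟩ : ∃ i ∈ 𝓔.sup id, ∃ j ∈ 𝓔.sup id, σ i = σ j ∧ i ≠ j := by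
    simpa only [Set.InjOn, mem_coe, not_forall, exists_prop] using hninj
  exact ⟨i, hi, j, hj, hij, σ, fun a =>
    (hσ a).trans (fH_identEdges_of_eq 𝓔 hij (congrArg a hσij)).symm⟩

end Irreducible

theorem all_identifications_isomorphic_implies_irreducible (n : ℕ)
    (𝓔 : Finset (Finset (Fin n))) (h2 : 2 ≤ (𝓔.sup id).card)
    (hiso : ∀ i j i' j' : Fin n, i ≠ j → i' ≠ j' →
      i ∈ 𝓔.sup id → j ∈ 𝓔.sup id → i' ∈ 𝓔.sup id → j' ∈ 𝓔.sup id →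
      EdgeIso (identEdges 𝓔 i j) (identEdges 𝓔 i' j')) :
    IrreducibleBF ⟨n, fH 𝓔⟩ := by
  obtain ⟨i₀, hi₀, j₀, hj₀, hij₀⟩ := one_lt_card.1 h2
  refine ⟨_, strictMinor_identEdges hij₀ hi₀ hj₀, fun g hg => ?_⟩
  obtain ⟨i, hi, j, hj, hij, hg⟩ := exists_minor_identEdges_of_strictMinor ⟨i₀, hi₀⟩ hg
  exact hg.trans (hiso i j i₀ j₀ hij hij₀ hi hj hi₀ hj₀).hMinor.minor_fH
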